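/- arXiv:1002.2486 — 2 statements merged into one kernel-verified Lean document; each statement's English description precedes it below -/
import Mathlib

section
/- Assume ‖θ‖_T > 0, |q_α| ≥ 2(T+1)‖θ‖_T, and 0 < ζ < 1 − exp(−|q_α|‖θ‖_T + ‖θ‖_T²/2). Then for every a with 0 < a ≤ −ln(1−ζ) the optimization problem: maximize H(y) over y ∈ L²([0,T];ℝ^d) subject to K(y) = a, has the unique solution y*_t = θ_t τ_{λ_a}(t) with λ_a = Φ^{-1}(a); that is, K(y*) = a and H(y) ≤ H(y*) for every y with K(y) = a, with equality only if y = y* almost everywhere. -/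
open MeasureTheory Real Set Filter
open scoped RealInnerProductSpace ENNReal

noncomputable section

abbrev E (d : ℕ) := EuclideanSpace ℝ (Fin d)

/-- ω(t) = T − t + 1 -/
def om (T t : ℝ) : ℝ := T - t + 1

/-- running L²-norm ‖y‖_t = (∫₀^t |y_s|² ds)^{1/2} -/
def nrm {d : ℕ} (y : ℝ → E d) (t : ℝ) : ℝ :=
  Real.sqrt (∫ s in Set.Ioc (0:ℝ) t, ‖y s‖ ^ 2)

/-- running inner product (y,θ)_t = ∫₀^t y_s'θ_s ds -/
def ipr {d : ℕ} (y θ : ℝ → E d) (t : ℝ) : ℝ :=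
  ∫ s in Set.Ioc (0:ℝ) t, ⟪y s, θ s⟫

/-- membership in L²([0,T];ℝ^d) -/
def L2fun {d : ℕ} (T : ℝ) (y : ℝ → E d) : Prop :=
  Measurable y ∧ IntegrableOn (fun t => ‖y t‖ ^ 2) (Set.Ioc 0 T)

def k1 {d : ℕ} (T : ℝ) (θ : ℝ → E d) : ℝ :=
  ∫ t in Set.Ioc (0:ℝ) T, om T t * ‖θ t‖ ^ 2

def k2 {d : ℕ} (T : ℝ) (θ : ℝ → E d) : ℝ :=
  ∫ t in Set.Ioc (0:ℝ) T, om T t ^ 2 * ‖θ t‖ ^ 2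

/-- G(u,λ) -/
def Gfun {d : ℕ} (T : ℝ) (θ : ℝ → E d) (qa u lam : ℝ) : ℝ :=
  ∫ t in Set.Ioc (0:ℝ) T,
    (om T t + lam) ^ 2 * ‖θ t‖ ^ 2 / (lam * |qa| + u * (om T t + lam)) ^ 2

open Classical in
/-- ρ(λ) = inf{u ≥ 0 : G(u,λ) ≤ 1}, with value +∞ if no such u exists -/
def rho {d : ℕ} (T : ℝ) (θ : ℝ → E d) (qa lam : ℝ) : ℝ≥0∞ :=
  if {u : ℝ | 0 ≤ u ∧ Gfun T θ qa u lam ≤ 1}.Nonempty then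
    ENNReal.ofReal (sInf {u : ℝ | 0 ≤ u ∧ Gfun T θ qa u lam ≤ 1})
  else ⊤

open Classical in
/-- τ_λ(t), with τ_λ ≡ 1 if ρ(λ) = +∞ -/
def tau {d : ℕ} (T : ℝ) (θ : ℝ → E d) (qa lam t : ℝ) : ℝ :=
  if rho T θ qa lam = ⊤ then 1
  else (rho T θ qa lam).toReal * (om T t + lam) /
    (lam * |qa| + (rho T θ qa lam).toReal * (om T t + lam))

def lamMax {d : ℕ} (T : ℝ) (θ : ℝ → E d) (qa : ℝ) : ℝ :=
  (k1 T θ + Real.sqrt (k2 T θ * (qa ^ 2 - nrm θ T ^ 2) + k1 T θ ^ 2)) /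
    (qa ^ 2 - nrm θ T ^ 2)

/-- Φ(λ) = |q_α|‖τ_λθ‖_T + ½‖τ_λθ‖_T² − ∫₀^T τ_λ(t)|θ_t|² dt -/
def Phi {d : ℕ} (T : ℝ) (θ : ℝ → E d) (qa lam : ℝ) : ℝ :=
  |qa| * nrm (fun t => tau T θ qa lam t • θ t) T
    + nrm (fun t => tau T θ qa lam t • θ t) T ^ 2 / 2
    - ∫ t in Set.Ioc (0:ℝ) T, tau T θ qa lam t * ‖θ t‖ ^ 2

/-- H(y) = ∫₀^T ω(t)(y_t'θ_t − ½|y_t|²) dt -/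
def Hfun {d : ℕ} (T : ℝ) (θ y : ℝ → E d) : ℝ :=
  ∫ t in Set.Ioc (0:ℝ) T, om T t * (⟪y t, θ t⟫ - ‖y t‖ ^ 2 / 2)

/-- K(y) = ½‖y‖_T² + |q_α|‖y‖_T − (y,θ)_T -/
def Kfun {d : ℕ} (T : ℝ) (θ y : ℝ → E d) (qa : ℝ) : ℝ :=
  nrm y T ^ 2 / 2 + |qa| * nrm y T - ipr y θ T

/-
Lagrange multipliers. For `λ ≥ 0` put `w = τ_λ θ`. When `0 < ρ(λ) < ∞` we have `G(ρ(λ), λ) = 1`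
(by continuity of `G` in `u`), hence `‖w‖_T = ρ(λ)`, and `w` satisfies the first-order condition
`(ω + λ) θ = (ω + λ + λ |q_α| / ‖w‖_T) w` of `y ↦ H(y) - λ K(y)` with `‖y‖_T` linearised at `w`.
Completing the square then gives
  `H(w) - H(y) = ∫ (ω + λ)/2 |y - w|² + λ (K(w) - K(y)) + λ |q_α| (‖y‖_T - (y, w)_T / ‖w‖_T)`,
whose last term is nonnegative by Cauchy–Schwarz; so `K(y) = K(w)` forces `H(y) ≤ H(w)`, with
equality only if `y = w` a.e. The degenerate values `ρ(λ) = ∞` and `ρ(λ) = 0` would give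
`Φ(λ) = |q_α| ‖θ‖_T - ‖θ‖_T² / 2 > a` and `Φ(λ) = 0 < a` respectively.
-/

section L2

variable {α F : Type*} [MeasurableSpace α] {μ : Measure α} [NormedAddCommGroup F] {f g : α → F}

lemma MeasureTheory.MemLp.integrable_norm_sq (hf : MemLp f 2 μ) :
    Integrable (fun a => ‖f a‖ ^ 2) μ :=
  (memLp_two_iff_integrable_sq_norm hf.1).1 hf

variable [InnerProductSpace ℝ F]

lemma MeasureTheory.MemLp.integrable_inner (hf : MemLp f 2 μ) (hg : MemLp g 2 μ) :
    Integrable (fun a => ⟪f a, g a⟫) μ :=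
  (L2.integrable_inner (𝕜 := ℝ) (hf.toLp f) (hg.toLp g)).congr <| by
    filter_upwards [hf.coeFn_toLp, hg.coeFn_toLp] with a hfa hga
    rw [hfa, hga]

lemma MeasureTheory.MemLp.norm_toLp_eq_sqrt (hf : MemLp f 2 μ) :
    ‖hf.toLp f‖ = √(∫ a, ‖f a‖ ^ 2 ∂μ) := by
  rw [← Real.sqrt_sq (norm_nonneg _), ← real_inner_self_eq_norm_sq, L2.inner_def]
  congr 1
  refine integral_congr_ae ?_
  filter_upwards [hf.coeFn_toLp] with a ha
  rw [ha, real_inner_self_eq_norm_sq]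

lemma integral_inner_le_sqrt_mul_sqrt (hf : MemLp f 2 μ) (hg : MemLp g 2 μ) :
    ∫ a, ⟪f a, g a⟫ ∂μ ≤ √(∫ a, ‖f a‖ ^ 2 ∂μ) * √(∫ a, ‖g a‖ ^ 2 ∂μ) := by
  rw [← hf.norm_toLp_eq_sqrt, ← hg.norm_toLp_eq_sqrt]
  refine le_of_eq_of_le ?_ (real_inner_le_norm (hf.toLp f) (hg.toLp g))
  rw [L2.inner_def]
  refine integral_congr_ae ?_
  filter_upwards [hf.coeFn_toLp, hg.coeFn_toLp] with a hfa hga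
  rw [hfa, hga]

end L2

lemma MeasureTheory.IntegrableOn.continuous_mul_Ioc {f g : ℝ → ℝ} {a b : ℝ}
    (hf : IntegrableOn f (Ioc a b)) (hg : Continuous g) :
    IntegrableOn (fun t => g t * f t) (Ioc a b) :=
  (((integrableOn_Icc_iff_integrableOn_Ioc).2 hf).continuousOn_mul hg.continuousOn
    isCompact_Icc).mono_set Ioc_subset_Icc_self

lemma apply_csInf_eq {f : ℝ → ℝ} {c : ℝ} (hS : {u | 0 ≤ u ∧ f u ≤ c}.Nonempty)
    (hpos : 0 < sInf {u | 0 ≤ u ∧ f u ≤ c})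
    (hf : ContinuousAt f (sInf {u | 0 ≤ u ∧ f u ≤ c})) :
    f (sInf {u | 0 ≤ u ∧ f u ≤ c}) = c := by
  set S := {u | 0 ≤ u ∧ f u ≤ c}
  have hbdd : BddBelow S := ⟨0, fun u hu => hu.1⟩
  refine le_antisymm ?_ ?_
  · exact ContinuousWithinAt.closure_le (csInf_mem_closure hS hbdd) hf.continuousWithinAt
      continuousWithinAt_const fun u hu => hu.2
  · have hmem : sInf S ∈ closure (Ico 0 (sInf S)) := by
      rw [closure_Ico hpos.ne]
      exact ⟨hpos.le, le_rfl⟩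
    refine ContinuousWithinAt.closure_le hmem continuousWithinAt_const hf.continuousWithinAt
      fun u hu => ?_
    by_contra! h
    exact notMem_of_lt_csInf hu.2 hbdd ⟨hu.1, h.le⟩

lemma neg_log_one_sub_lt {z x : ℝ} (h : z < 1 - Real.exp x) : -Real.log (1 - z) < -x := by
  have hpos : Real.exp x < 1 - z := by linarith
  linarith [(Real.lt_log_iff_exp_lt ((Real.exp_pos x).trans hpos)).2 hpos]

lemma inner_sub_eq_of_stationary {F : Type*} [NormedAddCommGroup F] [InnerProductSpace ℝ F]
    {θ w : F} (y : F) {ω lam k : ℝ} (h : (ω + lam) • θ = (ω + lam + lam * k) • w) :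
    ω * (⟪w, θ⟫ - ‖w‖ ^ 2 / 2) - ω * (⟪y, θ⟫ - ‖y‖ ^ 2 / 2)
      = (ω + lam) / 2 * ‖y - w‖ ^ 2
        + lam * ((‖w‖ ^ 2 / 2 + k * ‖w‖ ^ 2 - ⟪w, θ⟫) - (‖y‖ ^ 2 / 2 + k * ⟪y, w⟫ - ⟪y, θ⟫)) := by
  have hw : (ω + lam) * ⟪w, θ⟫ = (ω + lam + lam * k) * ‖w‖ ^ 2 := by
    rw [← real_inner_smul_right, h, real_inner_smul_right, real_inner_self_eq_norm_sq]
  have hy : (ω + lam) * ⟪y, θ⟫ = (ω + lam + lam * k) * ⟪y, w⟫ := by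
    rw [← real_inner_smul_right, h, real_inner_smul_right]
  rw [norm_sub_sq_real]
  linear_combination hw - hy

@[fun_prop]
lemma continuous_om (T : ℝ) : Continuous (om T) := by
  unfold om
  fun_prop

lemma one_le_om {T t : ℝ} (ht : t ∈ Ioc 0 T) : 1 ≤ om T t := by
  unfold om
  linarith [ht.2]

section Problem

variable {d : ℕ} {T : ℝ} {θ : ℝ → E d} {qa lam : ℝ}

lemma L2fun.memLp {y : ℝ → E d} (hy : L2fun T y) : MemLp y 2 (volume.restrict (Ioc 0 T)) :=
  (memLp_two_iff_integrable_sq_norm hy.1.aestronglyMeasurable).2 hy.2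

lemma nrm_sq (y : ℝ → E d) (T : ℝ) : nrm y T ^ 2 = ∫ t in Ioc 0 T, ‖y t‖ ^ 2 :=
  Real.sq_sqrt (setIntegral_nonneg measurableSet_Ioc fun _ _ => sq_nonneg _)

lemma integrable_om_add_mul_norm_sub_sq {w y : ℝ → E d}
    (hw : MemLp w 2 (volume.restrict (Ioc 0 T))) (hy : MemLp y 2 (volume.restrict (Ioc 0 T))) :
    Integrable (fun t => (om T t + lam) / 2 * ‖y t - w t‖ ^ 2) (volume.restrict (Ioc 0 T)) :=
  IntegrableOn.continuous_mul_Ioc (hy.sub hw).integrable_norm_sq (by fun_prop)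

lemma Hfun_sub_Hfun_eq {w y : ℝ → E d} {k : ℝ}
    (hθ : MemLp θ 2 (volume.restrict (Ioc 0 T))) (hw : MemLp w 2 (volume.restrict (Ioc 0 T)))
    (hy : MemLp y 2 (volume.restrict (Ioc 0 T)))
    (hstat : ∀ t ∈ Ioc 0 T, (om T t + lam) • θ t = (om T t + lam + lam * k) • w t) :
    Hfun T θ w - Hfun T θ y
      = (∫ t in Ioc 0 T, (om T t + lam) / 2 * ‖y t - w t‖ ^ 2)
        + lam * ((nrm w T ^ 2 / 2 + k * nrm w T ^ 2 - ipr w θ T)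
          - (nrm y T ^ 2 / 2 + k * ipr y w T - ipr y θ T)) := by
  have hww := hw.integrable_norm_sq
  have hyy := hy.integrable_norm_sq
  have hwθ := hw.integrable_inner hθ
  have hyθ := hy.integrable_inner hθ
  have hyw := hy.integrable_inner hw
  have hdist := integrable_om_add_mul_norm_sub_sq (lam := lam) hw hy
  have hHw : Integrable (fun t => om T t * (⟪w t, θ t⟫ - ‖w t‖ ^ 2 / 2))
      (volume.restrict (Ioc 0 T)) :=
    IntegrableOn.continuous_mul_Ioc (hwθ.sub (hww.div_const 2)) (by fun_prop)
  have hHy : Integrable (fun t => om T t * (⟪y t, θ t⟫ - ‖y t‖ ^ 2 / 2))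
      (volume.restrict (Ioc 0 T)) :=
    IntegrableOn.continuous_mul_Ioc (hyθ.sub (hyy.div_const 2)) (by fun_prop)
  rw [nrm_sq, nrm_sq, Hfun, Hfun, ipr, ipr, ipr, ← integral_sub hHw hHy, setIntegral_congr_fun
    measurableSet_Ioc fun t ht => inner_sub_eq_of_stationary (y t) (hstat t ht)]
  simp (disch := fun_prop) only [integral_add, integral_sub, integral_const_mul, integral_div]

lemma ipr_le_nrm_mul_nrm {y w : ℝ → E d} (hy : MemLp y 2 (volume.restrict (Ioc 0 T)))
    (hw : MemLp w 2 (volume.restrict (Ioc 0 T))) : ipr y w T ≤ nrm y T * nrm w T :=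
  integral_inner_le_sqrt_mul_sqrt hy hw

theorem Hfun_le_of_stationary {w y : ℝ → E d}
    (hθ : MemLp θ 2 (volume.restrict (Ioc 0 T))) (hw : MemLp w 2 (volume.restrict (Ioc 0 T)))
    (hy : MemLp y 2 (volume.restrict (Ioc 0 T))) (hlam : 0 ≤ lam)
    (hstat : ∀ t ∈ Ioc 0 T,
      (om T t + lam) • θ t = (om T t + lam + lam * (|qa| / nrm w T)) • w t)
    (hK : Kfun T θ y qa = Kfun T θ w qa) :
    Hfun T θ y ≤ Hfun T θ w ∧ (Hfun T θ y = Hfun T θ w → y =ᵐ[volume.restrict (Ioc 0 T)] w) := by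
  have hid := Hfun_sub_Hfun_eq hθ hw hy hstat
  -- `hkw` and `hky` also hold for `nrm w T = 0`, where `|qa| / nrm w T = 0`.
  have hkw : |qa| / nrm w T * nrm w T ^ 2 = |qa| * nrm w T := by
    rcases eq_or_ne (nrm w T) 0 with h0 | h0
    · simp [h0]
    · field_simp
  have hky : |qa| / nrm w T * ipr y w T ≤ |qa| * nrm y T := by
    have hnrm : 0 ≤ nrm y T := Real.sqrt_nonneg _
    rcases eq_or_ne (nrm w T) 0 with h0 | h0
    · simpa [h0] using mul_nonneg (abs_nonneg qa) hnrm
    · calc |qa| / nrm w T * ipr y w T ≤ |qa| / nrm w T * (nrm y T * nrm w T) :=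
            mul_le_mul_of_nonneg_left (ipr_le_nrm_mul_nrm hy hw)
              (div_nonneg (abs_nonneg _) (Real.sqrt_nonneg _))
        _ = |qa| * nrm y T := by field_simp
  have hmult : 0 ≤ (nrm w T ^ 2 / 2 + |qa| / nrm w T * nrm w T ^ 2 - ipr w θ T)
      - (nrm y T ^ 2 / 2 + |qa| / nrm w T * ipr y w T - ipr y θ T) := by
    unfold Kfun at hK
    linarith
  have hpos : ∀ t ∈ Ioc 0 T, 0 < (om T t + lam) / 2 := fun t ht => by
    linarith [one_le_om ht]
  have hdist := integrable_om_add_mul_norm_sub_sq (lam := lam) hw hy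
  have hdist_nonneg : 0 ≤ᵐ[volume.restrict (Ioc 0 T)]
      fun t => (om T t + lam) / 2 * ‖y t - w t‖ ^ 2 := by
    filter_upwards [ae_restrict_mem measurableSet_Ioc] with t ht
    exact mul_nonneg (hpos t ht).le (sq_nonneg _)
  have hint := integral_nonneg_of_ae hdist_nonneg
  refine ⟨by nlinarith [mul_nonneg hlam hmult], fun heq => ?_⟩
  have hzero : (fun t => (om T t + lam) / 2 * ‖y t - w t‖ ^ 2)
      =ᵐ[volume.restrict (Ioc 0 T)] 0 :=
    (integral_eq_zero_iff_of_nonneg_ae hdist_nonneg hdist).1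
      (by nlinarith [mul_nonneg hlam hmult])
  filter_upwards [hzero, ae_restrict_mem measurableSet_Ioc] with t h0 ht
  simpa [(hpos t ht).ne', sub_eq_zero] using h0

lemma Kfun_tau_smul : Kfun T θ (fun t => tau T θ qa lam t • θ t) qa = Phi T θ qa lam := by
  simp only [Kfun, Phi, ipr, real_inner_smul_left, real_inner_self_eq_norm_sq]
  ring

lemma Phi_of_rho_eq_top (h : rho T θ qa lam = ⊤) :
    Phi T θ qa lam = |qa| * nrm θ T - nrm θ T ^ 2 / 2 := by
  simp only [Phi, tau, h, if_true, one_smul, one_mul, ← nrm_sq]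
  ring

lemma Phi_of_rho_eq_zero (h : rho T θ qa lam = 0) : Phi T θ qa lam = 0 := by
  simp [Phi, tau, h, nrm]

lemma measurable_tau : Measurable (tau T θ qa lam) := by
  unfold tau
  split_ifs <;> fun_prop

lemma norm_tau_le_one (hlam : 0 ≤ lam) {t : ℝ} (ht : t ∈ Ioc 0 T) : ‖tau T θ qa lam t‖ ≤ 1 := by
  unfold tau
  split_ifs
  · simp
  · have hA : 0 ≤ (rho T θ qa lam).toReal * (om T t + lam) := by
      have := one_le_om ht
      positivity
    have hD : (rho T θ qa lam).toReal * (om T t + lam)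
        ≤ lam * |qa| + (rho T θ qa lam).toReal * (om T t + lam) := by
      have := mul_nonneg hlam (abs_nonneg qa)
      linarith
    rw [Real.norm_of_nonneg (div_nonneg hA (hA.trans hD))]
    exact div_le_one_of_le₀ hD (hA.trans hD)

lemma memLp_tau_smul (hlam : 0 ≤ lam) (hθ : MemLp θ 2 (volume.restrict (Ioc 0 T))) :
    MemLp (fun t => tau T θ qa lam t • θ t) 2 (volume.restrict (Ioc 0 T)) := by
  refine hθ.of_le (measurable_tau.aestronglyMeasurable.smul hθ.1) ?_
  filter_upwards [ae_restrict_mem measurableSet_Ioc] with t ht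
  rw [norm_smul]
  exact mul_le_of_le_one_left (norm_nonneg _) (norm_tau_le_one hlam ht)

lemma continuousAt_Gfun (hθm : Measurable θ) (hθ2 : IntegrableOn (fun t => ‖θ t‖ ^ 2) (Ioc 0 T))
    (hlam : 0 ≤ lam) {u : ℝ} (hu : 0 < u) : ContinuousAt (fun v => Gfun T θ qa v lam) u := by
  refine continuousAt_of_dominated (bound := fun t => (2 / u) ^ 2 * ‖θ t‖ ^ 2)
    (Eventually.of_forall fun v => Measurable.aestronglyMeasurable (by fun_prop)) ?_
    (hθ2.const_mul _) ?_
  · filter_upwards [Ioi_mem_nhds (half_lt_self hu)] with v hv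
    filter_upwards [ae_restrict_mem measurableSet_Ioc] with t ht
    have hA : 1 ≤ om T t + lam := by linarith [one_le_om ht]
    have hD : v * (om T t + lam) ≤ lam * |qa| + v * (om T t + lam) := by
      have := mul_nonneg hlam (abs_nonneg qa)
      linarith
    have hvA : 0 < v * (om T t + lam) := mul_pos (by linarith [mem_Ioi.1 hv]) (by linarith)
    have hratio : (om T t + lam) / (lam * |qa| + v * (om T t + lam)) ≤ 2 / u := by
      rw [div_le_div_iff₀ (hvA.trans_le hD) hu]
      nlinarith [mem_Ioi.1 hv]
    rw [Real.norm_of_nonneg (by positivity)]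
    calc (om T t + lam) ^ 2 * ‖θ t‖ ^ 2 / (lam * |qa| + v * (om T t + lam)) ^ 2
        = ((om T t + lam) / (lam * |qa| + v * (om T t + lam))) ^ 2 * ‖θ t‖ ^ 2 := by
          rw [div_pow, div_mul_eq_mul_div]
      _ ≤ (2 / u) ^ 2 * ‖θ t‖ ^ 2 := by gcongr
  · filter_upwards [ae_restrict_mem measurableSet_Ioc] with t ht
    have hA : 1 ≤ om T t + lam := by linarith [one_le_om ht]
    have hD : 0 < lam * |qa| + u * (om T t + lam) := by positivity
    exact continuousAt_const.div (by fun_prop) (pow_ne_zero 2 hD.ne')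

lemma Gfun_rho_eq_one (hθm : Measurable θ) (hθ2 : IntegrableOn (fun t => ‖θ t‖ ^ 2) (Ioc 0 T))
    (hlam : 0 ≤ lam) (htop : rho T θ qa lam ≠ ⊤) (hpos : 0 < (rho T θ qa lam).toReal) :
    Gfun T θ qa (rho T θ qa lam).toReal lam = 1 := by
  have hS : {u | 0 ≤ u ∧ Gfun T θ qa u lam ≤ 1}.Nonempty := by
    by_contra h
    exact htop (by simp [rho, h])
  have hr : (rho T θ qa lam).toReal = sInf {u | 0 ≤ u ∧ Gfun T θ qa u lam ≤ 1} := by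
    rw [rho, if_pos hS, ENNReal.toReal_ofReal (le_csInf hS fun _ hu => hu.1)]
  rw [hr] at hpos ⊢
  exact apply_csInf_eq (f := fun u => Gfun T θ qa u lam) hS hpos
    (continuousAt_Gfun hθm hθ2 hlam hpos)

lemma nrm_tau_smul (hθm : Measurable θ) (hθ2 : IntegrableOn (fun t => ‖θ t‖ ^ 2) (Ioc 0 T))
    (hlam : 0 ≤ lam) (htop : rho T θ qa lam ≠ ⊤) (hpos : 0 < (rho T θ qa lam).toReal) :
    nrm (fun t => tau T θ qa lam t • θ t) T = (rho T θ qa lam).toReal := by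
  rw [nrm, ← Real.sqrt_sq hpos.le, ← mul_one (_ ^ 2), ← Gfun_rho_eq_one hθm hθ2 hlam htop hpos,
    Gfun, ← integral_const_mul]
  congr 2 with t
  rw [tau, if_neg htop, norm_smul, mul_pow, Real.norm_eq_abs, sq_abs, div_pow, mul_pow]
  ring

lemma tau_smul_stationary (htop : rho T θ qa lam ≠ ⊤) (hpos : 0 < (rho T θ qa lam).toReal)
    (hlam : 0 ≤ lam) {t : ℝ} (ht : t ∈ Ioc 0 T) :
    (om T t + lam) • θ t
      = (om T t + lam + lam * (|qa| / (rho T θ qa lam).toReal)) • (tau T θ qa lam t • θ t) := by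
  have hA : 1 ≤ om T t + lam := by linarith [one_le_om ht]
  have hD : 0 < lam * |qa| + (rho T θ qa lam).toReal * (om T t + lam) := by positivity
  rw [smul_smul, tau, if_neg htop]
  congr 1
  field_simp
  ring

end Problem

theorem stmt2_general {d : ℕ} {T : ℝ}
    (θ : ℝ → E d) (hθm : Measurable θ)
    (hθ2 : IntegrableOn (fun t => ‖θ t‖ ^ 2) (Set.Ioc 0 T))
    {qa : ℝ} {z : ℝ}
    (hz1 : z < 1 - Real.exp (-(|qa| * nrm θ T) + nrm θ T ^ 2 / 2)) :
    ∀ b : ℝ, 0 < b → b ≤ -Real.log (1 - z) →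
      ∀ lam : ℝ, lam ∈ Set.Icc 0 (lamMax T θ qa) → Phi T θ qa lam = b →
        Kfun T θ (fun t => tau T θ qa lam t • θ t) qa = b ∧
        ∀ y : ℝ → E d, L2fun T y → Kfun T θ y qa = b →
          Hfun T θ y ≤ Hfun T θ (fun t => tau T θ qa lam t • θ t) ∧
          (Hfun T θ y = Hfun T θ (fun t => tau T θ qa lam t • θ t) →
            y =ᵐ[volume.restrict (Set.Ioc (0:ℝ) T)] fun t => tau T θ qa lam t • θ t) := by
  intro b hb hbz lam hlam hPhi
  have hK : Kfun T θ (fun t => tau T θ qa lam t • θ t) qa = b := Kfun_tau_smul.trans hPhi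
  refine ⟨hK, fun y hy hKy => ?_⟩
  have htop : rho T θ qa lam ≠ ⊤ := fun h => by
    rw [Phi_of_rho_eq_top h] at hPhi
    linarith [neg_log_one_sub_lt hz1]
  have hpos : 0 < (rho T θ qa lam).toReal := ENNReal.toReal_pos (fun h => by
    rw [Phi_of_rho_eq_zero h] at hPhi
    linarith) htop
  have hθ : MemLp θ 2 (volume.restrict (Ioc 0 T)) :=
    (memLp_two_iff_integrable_sq_norm hθm.aestronglyMeasurable).2 hθ2
  refine Hfun_le_of_stationary hθ (memLp_tau_smul hlam.1 hθ) hy.memLp hlam.1 (fun t ht => ?_)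
    (hKy.trans hK.symm)
  rw [nrm_tau_smul hθm hθ2 hlam.1 htop hpos]
  exact tau_smul_stationary htop hpos hlam.1 ht

/-- Proposition 1 of the paper. -/
theorem stmt2 {d : ℕ} (hd : 1 ≤ d) {T : ℝ} (hT : 0 < T)
    (θ : ℝ → E d) (hθm : Measurable θ)
    (hθ2 : IntegrableOn (fun t => ‖θ t‖ ^ 2) (Set.Ioc 0 T))
    {a qa : ℝ} (ha0 : 0 < a) (ha2 : a < 1 / 2) (hqneg : qa < 0)
    (hquant : (∫ s in Set.Iic qa, Real.exp (-s ^ 2 / 2)) = a * Real.sqrt (2 * π))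
    {z : ℝ} (hz0 : 0 < z)
    (hz1 : z < 1 - Real.exp (-(|qa| * nrm θ T) + nrm θ T ^ 2 / 2))
    (hθpos : 0 < nrm θ T)
    (hqbig : 2 * (T + 1) * nrm θ T ≤ |qa|) :
    ∀ b : ℝ, 0 < b → b ≤ -Real.log (1 - z) →
      ∀ lam : ℝ, lam ∈ Set.Icc 0 (lamMax T θ qa) → Phi T θ qa lam = b →
        Kfun T θ (fun t => tau T θ qa lam t • θ t) qa = b ∧
        ∀ y : ℝ → E d, L2fun T y → Kfun T θ y qa = b →
          Hfun T θ y ≤ Hfun T θ (fun t => tau T θ qa lam t • θ t) ∧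
          (Hfun T θ y = Hfun T θ (fun t => tau T θ qa lam t • θ t) →
            y =ᵐ[volume.restrict (Set.Ioc (0:ℝ) T)] fun t => tau T θ qa lam t • θ t) :=
  stmt2_general θ hθm hθ2 hz1
end
end

section
/- For every b > 0, the supremum of I(f) over f ∈ W_{0,b}[0,T] equals −T ln T − T ln(e^b/(e^b − 1)), and it is attained at the function f*(t) = ln( T e^b / (T e^b − t(e^b − 1)) ), which belongs to W_{0,b}[0,T]. -/
/-! With `S = T e^b / (e^b - 1)` the candidate is `f*(t) = log (S / (S - t))`, which solves the
Euler–Lagrange equation of `I`: `ḟ*(t) (S - t) = 1`, so `ln ḟ* - f*` is the constant `-ln S`.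
For a competitor `f`, `ln x ≤ x - 1` applied to `ḟ / ḟ*` gives
`ln ḟ - f ≤ (ln ḟ* - f*) + ((S - t)(ḟ - ḟ*) - (f - f*))`, and the last bracket is the derivative
of `(S - t)(f - f*)`, which vanishes at `0` and at `T` because `f` and `f*` share their endpoints. -/

open MeasureTheory Real Set Filter

noncomputable section

/-- The class W_{0,b}[0,T]: differentiable f on [0,T] with f(0)=0, f(T)=b, whose
derivative f' is positive and cadlag on [0,T] with ∫₀^T (ln f'(t))_− dt < ∞. -/
def WSp (T b : ℝ) (f f' : ℝ → ℝ) : Prop :=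
  f 0 = 0 ∧ f T = b ∧
    (∀ t ∈ Set.Icc (0:ℝ) T, HasDerivWithinAt f (f' t) (Set.Icc 0 T) t) ∧
    (∀ t ∈ Set.Icc (0:ℝ) T, 0 < f' t) ∧
    (∀ t ∈ Set.Ico (0:ℝ) T, ContinuousWithinAt f' (Set.Ici t) t) ∧
    (∀ t ∈ Set.Ioc (0:ℝ) T, ∃ L : ℝ, Filter.Tendsto f' (nhdsWithin t (Set.Iio t)) (nhds L)) ∧
    IntegrableOn (fun t => max (-Real.log (f' t)) 0) (Set.Ioc 0 T)

/-- I(f) = ∫₀^T (ln ḟ(t) − f(t)) dt -/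
def Ifun (T : ℝ) (f f' : ℝ → ℝ) : ℝ :=
  ∫ t in Set.Ioc (0:ℝ) T, (Real.log (f' t) - f t)

theorem MeasureTheory.Integrable.log {α : Type*} [MeasurableSpace α] {μ : Measure α} {u : α → ℝ}
    (hu : Integrable u μ) (hneg : Integrable (fun x => max (-Real.log (u x)) 0) μ) :
    Integrable (fun x => Real.log (u x)) μ := by
  refine (hu.abs.add hneg).mono'
    (measurable_log.comp_aemeasurable hu.aemeasurable).aestronglyMeasurable
    (Eventually.of_forall fun x => ?_)
  rw [Pi.add_apply, norm_eq_abs, abs_le]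
  constructor
  · linarith [le_max_left (-Real.log (u x)) 0, abs_nonneg (u x)]
  · linarith [log_abs (u x) ▸ log_le_self (abs_nonneg (u x)), le_max_right (-Real.log (u x)) 0]

section SubMulDeriv

variable {a b S : ℝ} {h h' : ℝ → ℝ}

theorem integrableOn_sub_mul_deriv_sub (hcont : ContinuousOn h (Icc a b))
    (hint : IntegrableOn h' (Ioc a b)) :
    IntegrableOn (fun t => (S - t) * h' t - h t) (Icc a b) :=
  (((integrableOn_Icc_iff_integrableOn_Ioc).2 hint).continuousOn_mul (by fun_prop)
    isCompact_Icc).sub hcont.integrableOn_Icc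

theorem integral_sub_mul_deriv_sub_eq (hab : a ≤ b) (hcont : ContinuousOn h (Icc a b))
    (hderiv : ∀ t ∈ Ioo a b, HasDerivAt h (h' t) t) (hint : IntegrableOn h' (Ioc a b)) :
    ∫ t in Ioc a b, ((S - t) * h' t - h t) = (S - b) * h b - (S - a) * h a := by
  have hprod : ∀ t ∈ Ioo a b,
      HasDerivAt (fun t => (S - t) * h t) ((S - t) * h' t - h t) t := fun t ht =>
    (((hasDerivAt_id' t).const_sub S).fun_mul (hderiv t ht)).congr_deriv (by ring)
  rw [← intervalIntegral.integral_of_le hab]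
  exact intervalIntegral.integral_eq_sub_of_hasDerivAt_of_le hab
    ((continuousOn_const.sub continuousOn_id).mul hcont) hprod
    ((intervalIntegrable_iff_integrableOn_Icc_of_le hab).2
      (integrableOn_sub_mul_deriv_sub hcont hint))

end SubMulDeriv

namespace WSp

variable {T b : ℝ} {f f' : ℝ → ℝ}

theorem continuousOn (hf : WSp T b f f') : ContinuousOn f (Icc 0 T) :=
  fun t ht => (hf.2.2.1 t ht).continuousWithinAt

theorem hasDerivAt (hf : WSp T b f f') {t : ℝ} (ht : t ∈ Ioo 0 T) : HasDerivAt f (f' t) t :=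
  (hf.2.2.1 t (Ioo_subset_Icc_self ht)).hasDerivAt (Icc_mem_nhds ht.1 ht.2)

theorem deriv_pos (hf : WSp T b f f') {t : ℝ} (ht : t ∈ Icc 0 T) : 0 < f' t :=
  hf.2.2.2.1 t ht

theorem integrableOn_deriv (hf : WSp T b f f') : IntegrableOn f' (Ioc 0 T) :=
  intervalIntegral.integrableOn_deriv_of_nonneg hf.continuousOn (fun _ ht => hf.hasDerivAt ht)
    fun _ ht => (hf.deriv_pos (Ioo_subset_Icc_self ht)).le

theorem integrableOn_log_deriv_sub (hf : WSp T b f f') :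
    IntegrableOn (fun t => log (f' t) - f t) (Ioc 0 T) :=
  (hf.integrableOn_deriv.log hf.2.2.2.2.2.2).sub
    (hf.continuousOn.integrableOn_Icc.mono_set Ioc_subset_Icc_self)

end WSp

theorem Ifun_le_of_deriv_mul_eq_one {T S b : ℝ} (hT : 0 ≤ T) {f f' g g' : ℝ → ℝ}
    (hf : WSp T b f f') (hg : WSp T b g g') (hg' : ∀ t ∈ Ioc 0 T, g' t * (S - t) = 1) :
    Ifun T f f' ≤ Ifun T g g' := by
  have hpointwise : ∀ t ∈ Ioc 0 T, log (f' t) - f t ≤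
      (log (g' t) - g t) + ((S - t) * (f' t - g' t) - (f t - g t)) := by
    intro t ht
    have hf't := hf.deriv_pos (Ioc_subset_Icc_self ht)
    have hg't := hg.deriv_pos (Ioc_subset_Icc_self ht)
    have hlog := log_le_sub_one_of_pos (div_pos hf't hg't)
    have hquot : f' t / g' t - 1 = (S - t) * (f' t - g' t) := by
      rw [eq_inv_of_mul_eq_one_right (hg' t ht)]
      field_simp
    rw [log_div hf't.ne' hg't.ne', hquot] at hlog
    linarith
  have hcont : ContinuousOn (fun t => f t - g t) (Icc 0 T) :=
    hf.continuousOn.sub hg.continuousOn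
  have hint : IntegrableOn (fun t => f' t - g' t) (Ioc 0 T) :=
    hf.integrableOn_deriv.sub hg.integrableOn_deriv
  have hslack : ∫ t in Ioc 0 T, ((S - t) * (f' t - g' t) - (f t - g t)) = 0 := by
    rw [integral_sub_mul_deriv_sub_eq hT hcont
      (fun t ht => (hf.hasDerivAt ht).sub (hg.hasDerivAt ht)) hint]
    simp [hf.1, hg.1, hf.2.1, hg.2.1]
  calc Ifun T f f'
      ≤ ∫ t in Ioc 0 T, ((log (g' t) - g t) + ((S - t) * (f' t - g' t) - (f t - g t))) :=
        setIntegral_mono_on hf.integrableOn_log_deriv_sub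
          (hg.integrableOn_log_deriv_sub.add
            ((integrableOn_sub_mul_deriv_sub hcont hint).mono_set Ioc_subset_Icc_self))
          measurableSet_Ioc hpointwise
    _ = Ifun T g g' := by
        rw [integral_add hg.integrableOn_log_deriv_sub
          ((integrableOn_sub_mul_deriv_sub hcont hint).mono_set Ioc_subset_Icc_self), hslack,
          add_zero, Ifun]

section OptimalPath

variable {S T : ℝ}

theorem wsp_log_div_sub (hT : 0 ≤ T) (hTS : T < S) :
    WSp T (log (S / (S - T))) (fun t => log (S / (S - t))) (fun t => (S - t)⁻¹) := by
  have hpos : ∀ t ∈ Icc 0 T, 0 < S - t := fun t ht => sub_pos.2 (ht.2.trans_lt hTS)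
  have hS : 0 < S := hT.trans_lt hTS
  have hcont : ∀ t ∈ Icc 0 T, ContinuousAt (fun t => (S - t)⁻¹) t := fun t ht =>
    (continuousAt_const.sub continuousAt_id).inv₀ (hpos t ht).ne'
  refine ⟨by simp [div_self hS.ne'], rfl, fun t ht => ?_, fun t ht => inv_pos.2 (hpos t ht),
    fun t ht => (hcont t (Ico_subset_Icc_self ht)).continuousWithinAt,
    fun t ht => ⟨_, (hcont t (Ioc_subset_Icc_self ht)).tendsto.mono_left nhdsWithin_le_nhds⟩, ?_⟩
  · have hlog : HasDerivAt (fun t => log S - log (S - t)) (S - t)⁻¹ t :=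
      (((hasDerivAt_id' t).const_sub S).log (hpos t ht).ne').const_sub (log S) |>.congr_deriv
        (by field_simp)
    exact hlog.hasDerivWithinAt.congr (fun y hy => log_div hS.ne' (hpos y hy).ne')
      (log_div hS.ne' (hpos t ht).ne')
  · have hlog : ContinuousOn (fun t => log (S - t)⁻¹) (Icc 0 T) := fun t ht =>
      ((hcont t ht).log (inv_pos.2 (hpos t ht)).ne').continuousWithinAt
    exact (hlog.neg.sup continuousOn_const).integrableOn_Icc.mono_set Ioc_subset_Icc_self

theorem Ifun_log_div_sub (hT : 0 ≤ T) (hTS : T < S) :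
    Ifun T (fun t => log (S / (S - t))) (fun t => (S - t)⁻¹) = -(T * log S) := by
  have hconst : ∀ t ∈ Ioc 0 T, log (S - t)⁻¹ - log (S / (S - t)) = -log S := fun t ht => by
    rw [log_inv, log_div (hT.trans_lt hTS).ne' (sub_pos.2 (ht.2.trans_lt hTS)).ne']
    ring
  rw [Ifun, setIntegral_congr_fun measurableSet_Ioc hconst, setIntegral_const,
    volume_real_Ioc_of_le hT, smul_eq_mul]
  ring

theorem Ifun_le_of_wsp_log_div_sub (hT : 0 ≤ T) (hTS : T < S) {f f' : ℝ → ℝ}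
    (hf : WSp T (log (S / (S - T))) f f') : Ifun T f f' ≤ -(T * log S) :=
  (Ifun_le_of_deriv_mul_eq_one hT hf (wsp_log_div_sub hT hTS)
    fun _ ht => inv_mul_cancel₀ (sub_pos.2 (ht.2.trans_lt hTS)).ne').trans_eq
    (Ifun_log_div_sub hT hTS)

end OptimalPath

/-- Lemma A.1 of the paper. -/
theorem stmt13 {T b : ℝ} (hT : 0 < T) (hb : 0 < b) :
    WSp T b
      (fun t => Real.log (T * Real.exp b / (T * Real.exp b - t * (Real.exp b - 1))))
      (fun t => (Real.exp b - 1) / (T * Real.exp b - t * (Real.exp b - 1))) ∧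
    Ifun T
      (fun t => Real.log (T * Real.exp b / (T * Real.exp b - t * (Real.exp b - 1))))
      (fun t => (Real.exp b - 1) / (T * Real.exp b - t * (Real.exp b - 1)))
      = -(T * Real.log T) - T * Real.log (Real.exp b / (Real.exp b - 1)) ∧
    ∀ f f' : ℝ → ℝ, WSp T b f f' →
      Ifun T f f' ≤ -(T * Real.log T) - T * Real.log (Real.exp b / (Real.exp b - 1)) := by
  set c := exp b - 1
  have hc : 0 < c := sub_pos.2 (one_lt_exp_iff.2 hb)
  set S := T * exp b / c
  have hS_sub : ∀ t, S - t = (T * exp b - t * c) / c := fun t => by simp only [S]; field_simp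
  have hpath : (fun t => log (T * exp b / (T * exp b - t * c))) = fun t => log (S / (S - t)) := by
    funext t
    rw [hS_sub, div_div_div_cancel_right₀ hc.ne']
  have hpath' : (fun t => c / (T * exp b - t * c)) = fun t => (S - t)⁻¹ := by
    funext t
    rw [hS_sub, inv_div]
  have hS_T : S - T = T / c := by
    rw [hS_sub]
    ring
  have hTS : T < S := sub_pos.1 (hS_T ▸ div_pos hT hc)
  have hend : log (S / (S - T)) = b := by
    rw [hS_T, div_div_div_cancel_right₀ hc.ne', mul_div_cancel_left₀ _ hT.ne', log_exp]
  have hmax : -(T * log T) - T * log (exp b / c) = -(T * log S) := by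
    rw [show S = T * (exp b / c) by ring, log_mul hT.ne' (by positivity)]
    ring
  rw [hpath, hpath', hmax, ← hend]
  exact ⟨wsp_log_div_sub hT.le hTS, Ifun_log_div_sub hT.le hTS,
    fun f f' hf => Ifun_le_of_wsp_log_div_sub hT.le hTS hf⟩
end
end
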